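/- Assume the negation of the Continuum Hypothesis (2^ℵ0 > ℵ1). Then for every ℵ0-coloring of the real numbers, there exist four pairwise distinct reals e1, e2, e3, e4 of the same color such that e1 + e2 = e3 + e4. -/

import Mathlib

/-!
Fix a set `B` of `ℵ₁` reals. For every real `a`, the coloring `b ↦ COL (a + b)` of the
uncountable set `B` has four points `b₀, …, b₃` of a common color `k a`. There are only `ℵ₁`
possible data `(k a, b₀, …, b₃)` but more than `ℵ₁` reals `a`, so two reals `a ≠ a'` share
them. Then some `v = bᵢ` differs from `u = b₀` and from `u ± (a' - a)`, and
`(a + u) + (a' + v) = (a + v) + (a' + u)` is the required monochromatic quadruple.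
-/

open Cardinal Function

universe u v

def HasMonochromaticAdditiveQuadruple {G β : Type*} [Add G] (col : G → β) : Prop :=
  ∃ e1 e2 e3 e4 : G,
    e1 ≠ e2 ∧ e1 ≠ e3 ∧ e1 ≠ e4 ∧ e2 ≠ e3 ∧ e2 ≠ e4 ∧ e3 ≠ e4 ∧
    col e1 = col e2 ∧ col e2 = col e3 ∧ col e3 = col e4 ∧ e1 + e2 = e3 + e4

theorem exists_embedding_fin_forall_apply_eq {α β : Type*} [Uncountable α] [Countable β]
    (f : α → β) (n : ℕ) : ∃ b, ∃ e : Fin n ↪ α, ∀ i, f (e i) = b := by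
  obtain ⟨b, hb⟩ : ∃ b, (f ⁻¹' {b}).Infinite := by
    by_contra! h
    refine Set.not_countable_univ (α := α) ?_
    rw [← Set.preimage_univ (f := f), ← Set.biUnion_preimage_singleton]
    exact Set.countable_univ.biUnion fun b _ => (h b).countable
  exact ⟨b, (Fin.valEmbedding.trans hb.natEmbedding).trans (.subtype _),
    fun i => (hb.natEmbedding _ i).2⟩

theorem exists_apply_notMem_of_card_lt {ι α : Type*} [Fintype ι] {x : ι → α} (hx : Injective x)
    {s : Finset α} (hs : s.card < Fintype.card ι) : ∃ i, x i ∉ s := by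
  by_contra! h
  exact hs.not_ge (Finset.card_le_card_of_injOn x (fun i _ => h i) hx.injOn)

theorem mk_prod_embedding_fin_le_lift {β : Type v} [Countable β] {B : Type u} [Infinite B]
    (n : ℕ) : #(β × (Fin n ↪ B)) ≤ lift.{v} #B := by
  have hB : #(Fin n ↪ B) ≤ #B :=
    (mk_embedding_le_arrow _ _).trans (by simpa [mk_arrow] using power_nat_le (aleph0_le_mk B))
  rw [mk_prod]
  calc lift.{u} #β * lift.{v} #(Fin n ↪ B) ≤ ℵ₀ * lift.{v} #B := by
        gcongr
        · simp
        · exact lift_le.2 hB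
    _ = lift.{v} #B := aleph0_mul_eq (by simp)

theorem hasMonochromaticAdditiveQuadruple_of_add_grid {G β : Type*} [AddCommGroup G]
    {col : G → β} {k : β} {a a' u v : G} (ha : a ≠ a') (huv : u ≠ v)
    (hv : v ≠ u + (a' - a)) (hv' : v ≠ u - (a' - a))
    (hau : col (a + u) = k) (hav : col (a + v) = k) (ha'u : col (a' + u) = k)
    (ha'v : col (a' + v) = k) :
    HasMonochromaticAdditiveQuadruple col := by
  refine ⟨a + u, a' + v, a + v, a' + u, ?_, ?_, ?_, ?_, ?_, ?_, by rw [hau, ha'v],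
    by rw [ha'v, hav], by rw [hav, ha'u], by abel⟩
  · exact fun h => hv' (by rw [← add_right_inj a', ← h]; abel)
  · exact fun h => huv (add_left_cancel h)
  · exact fun h => ha (add_right_cancel h)
  · exact fun h => ha (add_right_cancel h).symm
  · exact fun h => huv (add_left_cancel h).symm
  · exact fun h => hv (by rw [← add_right_inj a, h]; abel)

theorem hasMonochromaticAdditiveQuadruple_of_aleph_one_lt_mk {G : Type u} [AddCommGroup G]
    {β : Type v} [Countable β] (hG : ℵ₁ < #G) (col : G → β) :
    HasMonochromaticAdditiveQuadruple col := by
  classical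
  obtain ⟨B, hB⟩ := le_mk_iff_exists_set.1 hG.le
  have : Uncountable B := by rw [← aleph0_lt_mk_iff, hB]; exact aleph0_lt_aleph_one
  choose k e hke using fun a : G =>
    exists_embedding_fin_forall_apply_eq (fun b : B => col (a + b)) 4
  obtain ⟨a, a', hke_eq, hne⟩ := not_injective_iff.1 fun hinj : Injective fun a => (k a, e a) => by
    have hle := (lift_mk_le_lift_mk_of_injective hinj).trans
      (lift_le.2 (mk_prod_embedding_fin_le_lift 4))
    exact hG.not_ge (by simpa [hB] using hle)
  obtain ⟨hk, he⟩ := Prod.mk_inj.1 hke_eq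
  obtain ⟨i, hi⟩ := exists_apply_notMem_of_card_lt (x := fun i => (e a i : G))
    (Subtype.val_injective.comp (e a).injective)
    (s := {(e a 0 : G), e a 0 + (a' - a), e a 0 - (a' - a)})
    (Finset.card_le_three.trans_lt (by simp))
  simp only [Finset.mem_insert, Finset.mem_singleton, not_or] at hi
  obtain ⟨h0, hplus, hminus⟩ := hi
  exact hasMonochromaticAdditiveQuadruple_of_add_grid hne (Ne.symm h0) hplus hminus
    (hke a 0) (hke a i) (by rw [hk, he, hke]) (by rw [hk, he, hke])

/-- Assuming the negation of CH, every `ℵ₀`-coloring of `ℝ` admits four pairwise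
distinct monochromatic reals with `e1 + e2 = e3 + e4`. -/
theorem not_CH_implies_S (nch : Cardinal.aleph 1 < (2 : Cardinal) ^ Cardinal.aleph0) :
    ∀ COL : ℝ → ℕ,
      ∃ e1 e2 e3 e4 : ℝ,
        e1 ≠ e2 ∧ e1 ≠ e3 ∧ e1 ≠ e4 ∧ e2 ≠ e3 ∧ e2 ≠ e4 ∧ e3 ≠ e4 ∧
        COL e1 = COL e2 ∧ COL e2 = COL e3 ∧ COL e3 = COL e4 ∧
        e1 + e2 = e3 + e4 := by
  have hℝ : ℵ₁ < #ℝ := by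
    rwa [mk_real, ← lift_lt, lift_continuum, lift_aleph, Ordinal.lift_one, ← two_power_aleph0]
  exact hasMonochromaticAdditiveQuadruple_of_aleph_one_lt_mk hℝ
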